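/- If A ⊆ ℝ² is a set whose distance set satisfies Δ(A) ⊆ {4n + 3 : n ∈ ℕ}, then A has at most 3 elements. -/

import Mathlib

/-!
Suppose `p₀, …, p₃` are four points of the plane at pairwise odd integer distances `dᵢⱼ`. The
vectors `vᵢ = pᵢ - p₀` (`i = 1, 2, 3`) are linearly dependent, so their Gram matrix is singular,
and by polarization twice the Gram matrix is the integer matrix `(d₀ᵢ² + d₀ⱼ² - dᵢⱼ²)ᵢⱼ`. Odd
squares are `1` modulo `8`, so modulo `8` this matrix is `I + J`, whose determinant is `4 ≠ 0`.
The same argument shows that `k + 1` points at odd distances in a space of dimension `< k` force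
`8 ∣ k + 1`.
-/

open Module Matrix

theorem Set.finite_and_ncard_le_of_forall_not_injective {α : Type*} {A : Set α} {n : ℕ}
    (h : ∀ f : Fin (n + 1) → α, (∀ i, f i ∈ A) → ¬ Function.Injective f) :
    A.Finite ∧ A.ncard ≤ n := by
  rw [← Set.encard_le_coe_iff_finite_ncard_le]
  by_contra! hlt
  obtain ⟨t, htA, ht⟩ := Set.exists_subset_encard_eq (Order.add_one_le_of_lt hlt)
  have : Finite t := Set.finite_of_encard_eq_coe ht
  have hcard : Nat.card t = n + 1 := by
    rw [Nat.card_coe_set_eq, Set.ncard_def, ht]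
    rfl
  let e := (Finite.equivFinOfCardEq hcard).symm
  exact h (fun i => e i) (fun i => htA (e i).2) (Subtype.val_injective.comp e.injective)

theorem Matrix.det_one_add_ones {ι R : Type*} [Fintype ι] [DecidableEq ι] [CommRing R] :
    (1 + of fun _ _ => 1 : Matrix ι ι R).det = 1 + Fintype.card ι := by
  have : (of fun _ _ => 1 : Matrix ι ι R) =
      replicateCol Unit (1 : ι → R) * replicateRow Unit (1 : ι → R) := by
    ext
    simp [Matrix.mul_apply]
  rw [this, det_one_add_replicateCol_mul_replicateRow, one_dotProduct_one]

theorem ZMod.intCast_sq_eq_one_of_odd {m : ℤ} (hm : Odd m) : (m : ZMod 8) ^ 2 = 1 := by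
  rw [← Int.cast_pow, ← Int.cast_one, ZMod.intCast_eq_intCast_iff_dvd_sub]
  simpa using dvd_sub_comm.mp (Int.eight_dvd_sq_sub_one_of_odd hm)

section InnerProductSpace

variable {E : Type*} [NormedAddCommGroup E] [InnerProductSpace ℝ E]

theorem two_mul_inner_sub_sub_eq (a b o : E) :
    2 * inner ℝ (a - o) (b - o) = dist a o ^ 2 + dist b o ^ 2 - dist a b ^ 2 := by
  have := norm_sub_sq_real (a - o) (b - o)
  rw [sub_sub_sub_cancel_right] at this
  rw [dist_eq_norm, dist_eq_norm, dist_eq_norm]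
  linarith

theorem det_gram_eq_zero_of_finrank_lt [FiniteDimensional ℝ E] {ι : Type*} [Fintype ι]
    [DecidableEq ι] (v : ι → E) (h : finrank ℝ E < Fintype.card ι) : (gram ℝ v).det = 0 := by
  by_contra hdet
  exact h.not_ge (det_gram_ne_zero_iff_linearIndependent.mp hdet).fintype_card_le_finrank

/-- When `D i j = dist (p i) (p j)`, this is twice the Gram matrix of the `p i.succ - p 0`. -/
def doubleGramOfDist {k : ℕ} (D : Fin (k + 1) → Fin (k + 1) → ℤ) : Matrix (Fin k) (Fin k) ℤ :=
  of fun i j => D i.succ 0 ^ 2 + D j.succ 0 ^ 2 - D i.succ j.succ ^ 2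

theorem det_doubleGramOfDist_eq_zero [FiniteDimensional ℝ E] {k : ℕ} {p : Fin (k + 1) → E}
    {D : Fin (k + 1) → Fin (k + 1) → ℤ} (hD : ∀ i j, dist (p i) (p j) = D i j)
    (hk : finrank ℝ E < k) : (doubleGramOfDist D).det = 0 := by
  have hgram : (doubleGramOfDist D).map (Int.cast : ℤ → ℝ) =
      (2 : ℝ) • gram ℝ fun i : Fin k => p i.succ - p 0 := by
    ext i j
    simp [doubleGramOfDist, gram_apply, two_mul_inner_sub_sub_eq, hD]
  have : ((doubleGramOfDist D).det : ℝ) = 0 := by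
    rw [Int.cast_det, hgram, det_smul, det_gram_eq_zero_of_finrank_lt _ (by simpa using hk),
      mul_zero]
  exact_mod_cast this

theorem doubleGramOfDist_map_intCast_zmod_eight {k : ℕ} {D : Fin (k + 1) → Fin (k + 1) → ℤ}
    (hdiag : ∀ i, D i i = 0) (hodd : Pairwise fun i j => Odd (D i j)) :
    (doubleGramOfDist D).map (Int.cast : ℤ → ZMod 8) = 1 + of fun _ _ => 1 := by
  ext i j
  have hsq {i j} (hij : i ≠ j) := ZMod.intCast_sq_eq_one_of_odd (hodd hij)
  by_cases hij : i = j
  · subst hij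
    simp [doubleGramOfDist, hdiag, hsq (Fin.succ_ne_zero i)]
  · simp [doubleGramOfDist, hij, hsq (Fin.succ_ne_zero i), hsq (Fin.succ_ne_zero j),
      hsq ((Fin.succ_injective _).ne hij)]

theorem eight_dvd_of_pairwise_odd_dist [FiniteDimensional ℝ E] {k : ℕ} (p : Fin (k + 1) → E)
    (hk : finrank ℝ E < k) (hp : Pairwise fun i j => ∃ m : ℤ, Odd m ∧ dist (p i) (p j) = m) :
    8 ∣ k + 1 := by
  have hD : ∀ i j, ∃ m : ℤ, (i ≠ j → Odd m) ∧ dist (p i) (p j) = m := by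
    intro i j
    by_cases hij : i = j
    · exact ⟨0, fun h => (h hij).elim, by simp [hij]⟩
    · obtain ⟨m, hm, hd⟩ := hp hij
      exact ⟨m, fun _ => hm, hd⟩
  choose D hodd hD using hD
  have hdiag : ∀ i, D i i = 0 := fun i => by exact_mod_cast (hD i i).symm.trans (dist_self _)
  rw [← ZMod.natCast_eq_zero_iff]
  calc ((k + 1 : ℕ) : ZMod 8) = (1 + of fun _ _ => 1 : Matrix (Fin k) (Fin k) (ZMod 8)).det := by
        rw [det_one_add_ones, Fintype.card_fin, Nat.cast_succ, add_comm]
    _ = ((doubleGramOfDist D).det : ZMod 8) := by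
        rw [Int.cast_det, doubleGramOfDist_map_intCast_zmod_eight hdiag hodd]
    _ = 0 := by rw [det_doubleGramOfDist_eq_zero hD hk, Int.cast_zero]

end InnerProductSpace

/-- If all pairwise distances between distinct points of `A ⊆ ℝ²` lie in
`{4n + 3 : n ∈ ℕ}`, then `A` has at most 3 elements. -/
theorem distance_set_four_int_plus_three (A : Set (EuclideanSpace ℝ (Fin 2)))
    (hA : ∀ a ∈ A, ∀ a' ∈ A, a ≠ a' → ∃ n : ℕ, dist a a' = 4 * (n : ℝ) + 3) :
    A.Finite ∧ A.ncard ≤ 3 := by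
  refine Set.finite_and_ncard_le_of_forall_not_injective fun p hpA hinj => ?_
  have h8 : 8 ∣ 3 + 1 := eight_dvd_of_pairwise_odd_dist p (by simp) fun i j hij => by
    obtain ⟨n, hn⟩ := hA _ (hpA i) _ (hpA j) (hinj.ne hij)
    exact ⟨4 * n + 3, ⟨2 * n + 1, by ring⟩, by rw [hn]; push_cast; ring⟩
  omega
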